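/- arXiv:2406.00224 — 3 statements merged into one kernel-verified Lean document; each statement's English description precedes it below -/
import Mathlib

section
/- Let X₁ be a Bernoulli random variable with Pr[X₁=1] = p₁, and let Y be a nonnegative random variable with conditional means μ₁ = E[Y | X₁=1], μ₀ = E[Y | X₁=0] satisfying μ₁ ≤ μ₀ ≤ μ₁ + 1. Suppose for some α > 0 that E[e^{αY} | X₁=1] ≤ e^{(e^α-1)μ₁} and E[e^{αY} | X₁=0] ≤ e^{(e^α-1)μ₀}. Setting μ = p₁(μ₁+1) + (1-p₁)μ₀, we have E[e^{α(X₁+Y)}] ≤ e^{(e^α-1)μ}. -/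
open MeasureTheory Real

/-- Key scalar inequality: for `c > 0`, `p ∈ [0,1]`, `μ₁ ≤ μ₀ ≤ μ₁ + 1`,
`(1+c)·p·e^{cμ₁} + (1-p)·e^{cμ₀} ≤ e^{c(p(μ₁+1)+(1-p)μ₀)}`. -/
lemma keyA (c p μ₀ μ₁ : ℝ) (hc : 0 < c) (hp0 : 0 ≤ p) (hp1 : p ≤ 1)
    (h1 : μ₁ ≤ μ₀) (h2 : μ₀ ≤ μ₁ + 1) :
    (1 + c) * (p * Real.exp (c * μ₁)) + (1 - p) * Real.exp (c * μ₀)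
      ≤ Real.exp (c * (p * (μ₁ + 1) + (1 - p) * μ₀)) := by
  set t : ℝ := μ₀ - μ₁ with ht
  have ht0 : 0 ≤ t := by simp [ht]; linarith
  have ht1 : t ≤ 1 := by simp [ht]; linarith
  -- convexity of exp: e^{-ct} ≤ (1-t) + t e^{-c}
  have hconv : Real.exp (-(c * t)) ≤ (1 - t) + t * Real.exp (-c) := by
    have := convexOn_exp.2 (Set.mem_univ (0 : ℝ)) (Set.mem_univ (-c))
      (by linarith : (0:ℝ) ≤ 1 - t) ht0 (by ring)
    simpa [smul_eq_mul, mul_comm] using this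
  -- (1+c) e^{-c} ≤ 1
  have hcexp : (1 + c) * Real.exp (-c) ≤ 1 := by
    have h := Real.add_one_le_exp c
    have hpos := Real.exp_pos (-c)
    rw [Real.exp_neg]
    rw [mul_inv_le_iff₀ (Real.exp_pos c)]
    linarith
  -- (1+c) e^{-ct} ≤ 1 + c (1 - t)
  have hstep : (1 + c) * Real.exp (-(c * t)) ≤ 1 + c * (1 - t) := by
    have h1c : (0:ℝ) ≤ 1 + c := by linarith
    calc (1 + c) * Real.exp (-(c * t)) ≤ (1 + c) * ((1 - t) + t * Real.exp (-c)) :=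
          mul_le_mul_of_nonneg_left hconv h1c
      _ = (1 + c) * (1 - t) + t * ((1 + c) * Real.exp (-c)) := by ring
      _ ≤ (1 + c) * (1 - t) + t * 1 := by
          have := mul_le_mul_of_nonneg_left hcexp ht0
          linarith
      _ = 1 + c * (1 - t) := by ring
  -- combine with p
  have hmain : p * ((1 + c) * Real.exp (-(c * t))) + (1 - p)
      ≤ Real.exp (c * p * (1 - t)) := by
    calc p * ((1 + c) * Real.exp (-(c * t))) + (1 - p)
        ≤ p * (1 + c * (1 - t)) + (1 - p) := by
          have := mul_le_mul_of_nonneg_left hstep hp0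
          linarith
      _ = c * p * (1 - t) + 1 := by ring
      _ ≤ Real.exp (c * p * (1 - t)) := Real.add_one_le_exp _
  -- multiply by e^{c μ₀}
  have hE : Real.exp (c * μ₁) = Real.exp (-(c * t)) * Real.exp (c * μ₀) := by
    rw [← Real.exp_add]; congr 1; simp [ht]; ring
  have hEpos := Real.exp_pos (c * μ₀)
  calc (1 + c) * (p * Real.exp (c * μ₁)) + (1 - p) * Real.exp (c * μ₀)
      = (p * ((1 + c) * Real.exp (-(c * t))) + (1 - p)) * Real.exp (c * μ₀) := by
        rw [hE]; ring
    _ ≤ Real.exp (c * p * (1 - t)) * Real.exp (c * μ₀) :=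
        mul_le_mul_of_nonneg_right hmain hEpos.le
    _ = Real.exp (c * (p * (μ₁ + 1) + (1 - p) * μ₀)) := by
        rw [← Real.exp_add]; congr 1; simp [ht]; ring

/-- Inductive step of the concentration lemma: let `X₁` be a Bernoulli
indicator with `Pr[X₁ = 1] = p₁`, and `Y ≥ 0` with conditional means
`μ₁ = E[Y | X₁=1]`, `μ₀ = E[Y | X₁=0]` satisfying `μ₁ ≤ μ₀ ≤ μ₁ + 1`.
If `E[e^{αY} | X₁=1] ≤ e^{(e^α-1)μ₁}` and `E[e^{αY} | X₁=0] ≤ e^{(e^α-1)μ₀}`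
(stated here as bounds on the corresponding set integrals), then for
`μ = p₁(μ₁+1) + (1-p₁)μ₀` we have `E[e^{α(X₁+Y)}] ≤ e^{(e^α-1)μ}`. -/
theorem stmt_7 {Ω : Type*} [MeasurableSpace Ω] (μ : Measure Ω) [IsProbabilityMeasure μ]
    (X₁ Y : Ω → ℝ) (hX₁ : Measurable X₁) (hY : Measurable Y)
    (hX₁01 : ∀ ω, X₁ ω = 0 ∨ X₁ ω = 1)
    (hYnonneg : ∀ ω, 0 ≤ Y ω)
    (p₁ μ₀ μ₁ α : ℝ) (hα : 0 < α)
    (hp₁ : (μ {ω | X₁ ω = 1}).toReal = p₁)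
    (hcondmean1 : ∫ ω in {ω | X₁ ω = 1}, Y ω ∂μ = p₁ * μ₁)
    (hcondmean0 : ∫ ω in {ω | X₁ ω = 0}, Y ω ∂μ = (1 - p₁) * μ₀)
    (horder : μ₁ ≤ μ₀ ∧ μ₀ ≤ μ₁ + 1)
    (hint : Integrable (fun ω => Real.exp (α * Y ω)) μ)
    (hcondmgf1 : ∫ ω in {ω | X₁ ω = 1}, Real.exp (α * Y ω) ∂μ
      ≤ p₁ * Real.exp ((Real.exp α - 1) * μ₁))
    (hcondmgf0 : ∫ ω in {ω | X₁ ω = 0}, Real.exp (α * Y ω) ∂μ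
      ≤ (1 - p₁) * Real.exp ((Real.exp α - 1) * μ₀)) :
    ∫ ω, Real.exp (α * (X₁ ω + Y ω)) ∂μ
      ≤ Real.exp ((Real.exp α - 1) * (p₁ * (μ₁ + 1) + (1 - p₁) * μ₀)) := by
  set s : Set Ω := {ω | X₁ ω = 1} with hs_def
  have hs : MeasurableSet s := hX₁ (measurableSet_singleton 1)
  have hsc : sᶜ = {ω | X₁ ω = 0} := by
    ext ω
    rcases hX₁01 ω with h | h <;> simp [hs_def, h]
  -- p₁ ∈ [0, 1]
  have hp0 : 0 ≤ p₁ := hp₁ ▸ ENNReal.toReal_nonneg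
  have hp1 : p₁ ≤ 1 := by
    rw [← hp₁]
    exact ENNReal.toReal_le_of_le_ofReal one_pos.le (by simpa using prob_le_one)
  -- integrability of the full integrand
  set g : Ω → ℝ := fun ω => Real.exp (α * (X₁ ω + Y ω)) with hg_def
  have hgmeas : Measurable g := by
    apply Real.measurable_exp.comp
    exact (measurable_const.mul (hX₁.add hY))
  have hgint : Integrable g μ := by
    apply Integrable.mono' (hint.const_mul (Real.exp α))
    · exact hgmeas.aestronglyMeasurable
    · filter_upwards with ω
      rw [Real.norm_eq_abs, abs_of_nonneg (Real.exp_pos _).le]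
      have hX1le : α * X₁ ω ≤ α := by
        rcases hX₁01 ω with h | h <;> simp [h] <;> linarith
      calc g ω = Real.exp (α * X₁ ω) * Real.exp (α * Y ω) := by
            rw [hg_def]; simp [← Real.exp_add]; ring_nf
        _ ≤ Real.exp α * Real.exp (α * Y ω) :=
            mul_le_mul_of_nonneg_right (Real.exp_le_exp.mpr hX1le) (Real.exp_pos _).le
  -- split
  have hsplit : ∫ ω, g ω ∂μ = ∫ ω in s, g ω ∂μ + ∫ ω in sᶜ, g ω ∂μ :=
    (integral_add_compl hs hgint).symm
  -- on s
  have hone : ∫ ω in s, g ω ∂μ = Real.exp α * ∫ ω in s, Real.exp (α * Y ω) ∂μ := by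
    rw [← integral_const_mul]
    apply setIntegral_congr_fun hs
    intro ω hω
    have hx : X₁ ω = 1 := hω
    simp only [hg_def, hx]
    rw [mul_add, Real.exp_add, mul_one]
  have hzero : ∫ ω in sᶜ, g ω ∂μ = ∫ ω in sᶜ, Real.exp (α * Y ω) ∂μ := by
    apply setIntegral_congr_fun hs.compl
    intro ω hω
    have hx : X₁ ω = 0 := by rw [hsc] at hω; exact hω
    simp [hg_def, hx]
  have hc : 0 < Real.exp α - 1 := by
    have := Real.add_one_le_exp α
    linarith
  have hbound : ∫ ω, g ω ∂μ
      ≤ Real.exp α * (p₁ * Real.exp ((Real.exp α - 1) * μ₁))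
        + (1 - p₁) * Real.exp ((Real.exp α - 1) * μ₀) := by
    rw [hsplit, hone, hzero]
    have := mul_le_mul_of_nonneg_left hcondmgf1 (Real.exp_pos α).le
    have h0 : ∫ ω in sᶜ, Real.exp (α * Y ω) ∂μ
        ≤ (1 - p₁) * Real.exp ((Real.exp α - 1) * μ₀) := by
      rw [hsc]; exact hcondmgf0
    linarith
  calc ∫ ω, Real.exp (α * (X₁ ω + Y ω)) ∂μ
      ≤ Real.exp α * (p₁ * Real.exp ((Real.exp α - 1) * μ₁))
        + (1 - p₁) * Real.exp ((Real.exp α - 1) * μ₀) := hbound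
    _ = (1 + (Real.exp α - 1)) * (p₁ * Real.exp ((Real.exp α - 1) * μ₁))
        + (1 - p₁) * Real.exp ((Real.exp α - 1) * μ₀) := by ring_nf
    _ ≤ Real.exp ((Real.exp α - 1) * (p₁ * (μ₁ + 1) + (1 - p₁) * μ₀)) :=
        keyA _ _ _ _ hc hp0 hp1 horder.1 horder.2
end

section
/- Let I ⊔ I′ = {i₁ < … < i_k} be a partition into two disjoint sets, and let I_odd, I_even be the odd/even-indexed subsets. If a set B of indices is an interval of {i₁,…,i_k} (contiguous in the ordering restricted to these elements) and both |B∩I| ≤ c and |B∩I′| ≤ c for some capacity c, then |B∩I_odd| ≤ c and |B∩I_even| ≤ c. -/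
/-!
Since `I ∪ I'` covers everything, `|B| ≤ |B ∩ I| + |B ∩ I'| ≤ 2c`. Along the interval `B` the
indices alternate in parity: shifting the elements of one parity class by one lands in `B` or
just past its maximum and never meets the class itself, so the class has at most `(|B| + 1) / 2`
elements, which is at most `c`.
-/

open Finset

lemma Finset.card_le_card_inter_add_card_inter {α : Type*} [DecidableEq α] {B s t : Finset α}
    (hB : B ⊆ s ∪ t) : #B ≤ #(B ∩ s) + #(B ∩ t) := by
  calc #B = #((B ∩ s) ∪ (B ∩ t)) := by rw [← inter_union_distrib_left, inter_eq_left.2 hB]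
    _ ≤ #(B ∩ s) + #(B ∩ t) := card_union_le _ _

lemma Nat.two_mul_card_filter_le_of_ordConnected {B : Finset ℕ} (hB : (B : Set ℕ).OrdConnected)
    (P : ℕ → Prop) [DecidablePred P] (hP : ∀ x, P x → ¬ P (x + 1)) :
    2 * #{x ∈ B | P x} ≤ #B + 1 := by
  rcases B.eq_empty_or_nonempty with rfl | hne
  · simp
  set S := {x ∈ B | P x}
  have hdisj : Disjoint S (S.map (addRightEmbedding 1)) := by
    simp only [disjoint_left, mem_map, mem_filter, addRightEmbedding_apply, S]
    rintro _ ⟨-, hPy⟩ ⟨x, ⟨-, hPx⟩, rfl⟩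
    exact hP x hPx hPy
  have hsub : S ∪ S.map (addRightEmbedding 1) ⊆ insert (B.max' hne + 1) B := by
    intro y hy
    simp only [mem_union, mem_map, mem_filter, addRightEmbedding_apply, S] at hy
    rcases hy with ⟨hy, -⟩ | ⟨x, ⟨hx, -⟩, rfl⟩
    · exact mem_insert_of_mem hy
    rcases (B.le_max' x hx).eq_or_lt with hmax | hlt
    · rw [← hmax]; exact mem_insert_self _ _
    · exact mem_insert_of_mem (hB.out hx (B.max'_mem hne) ⟨by omega, hlt⟩)
  calc 2 * #S = #(S ∪ S.map (addRightEmbedding 1)) := by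
        rw [card_union_of_disjoint hdisj, card_map]; ring
    _ ≤ #(insert (B.max' hne + 1) B) := card_le_card hsub
    _ ≤ #B + 1 := card_insert_le _ _

lemma Fin.ordConnected_coe_map_valEmbedding {k : ℕ} {B : Finset (Fin k)}
    (hB : (B : Set (Fin k)).OrdConnected) :
    ((B.map Fin.valEmbedding : Finset ℕ) : Set ℕ).OrdConnected := by
  refine ⟨?_⟩
  simp only [coe_map, Set.mem_image, mem_coe, Fin.valEmbedding_apply]
  rintro _ ⟨a, ha, rfl⟩ _ ⟨b, hb, rfl⟩ y ⟨hay, hyb⟩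
  exact ⟨⟨y, hyb.trans_lt b.isLt⟩, hB.out ha hb ⟨hay, hyb⟩, rfl⟩

lemma Fin.two_mul_card_filter_mod_two_le {k : ℕ} {B : Finset (Fin k)}
    (hB : (B : Set (Fin k)).OrdConnected) (r : ℕ) :
    2 * #{j ∈ B | j.val % 2 = r} ≤ #B + 1 := by
  have h := Nat.two_mul_card_filter_le_of_ordConnected (Fin.ordConnected_coe_map_valEmbedding hB)
    (· % 2 = r) (by omega)
  rwa [filter_map, card_map, card_map] at h

theorem stmt_11_general (k : ℕ) (I I' : Finset (Fin k))
    (hcover : I ∪ I' = Finset.univ)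
    (Iodd Ieven : Finset (Fin k))
    (hodd : Iodd = Finset.univ.filter (fun j : Fin k => j.val % 2 = 0))
    (heven : Ieven = Finset.univ.filter (fun j : Fin k => j.val % 2 = 1))
    (B : Finset (Fin k))
    (hinterval : ∀ a b c : Fin k, a ∈ B → c ∈ B → a ≤ b → b ≤ c → b ∈ B)
    (c : ℕ) (hI : (B ∩ I).card ≤ c) (hI' : (B ∩ I').card ≤ c) :
    (B ∩ Iodd).card ≤ c ∧ (B ∩ Ieven).card ≤ c := by
  have hB : (B : Set (Fin k)).OrdConnected :=
    ⟨fun a ha c hc b hb => hinterval a b c ha hc hb.1 hb.2⟩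
  have hcard : #B ≤ 2 * c :=
    (card_le_card_inter_add_card_inter (s := I) (t := I') (by simp [hcover])).trans (by omega)
  have hparity (r : ℕ) : #(B ∩ univ.filter (fun j : Fin k => j.val % 2 = r)) ≤ c := by
    have := Fin.two_mul_card_filter_mod_two_le hB r
    rw [inter_filter, inter_univ]
    omega
  subst hodd heven
  exact ⟨hparity 0, hparity 1⟩

/-- Feasibility preservation for the alternating partition: with the ordered
elements `i₁ < … < i_k` identified with `Fin k`, `I ⊔ I′` a partition, and
`I_odd`/`I_even` the odd/even-indexed subsets, if `B` is an interval of the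
ordering and `|B ∩ I| ≤ c` and `|B ∩ I′| ≤ c`, then `|B ∩ I_odd| ≤ c` and
`|B ∩ I_even| ≤ c`. -/
theorem stmt_11 (k : ℕ) (I I' : Finset (Fin k))
    (hcover : I ∪ I' = Finset.univ) (hdisj : Disjoint I I')
    (Iodd Ieven : Finset (Fin k))
    (hodd : Iodd = Finset.univ.filter (fun j : Fin k => j.val % 2 = 0))
    (heven : Ieven = Finset.univ.filter (fun j : Fin k => j.val % 2 = 1))
    (B : Finset (Fin k))
    (hinterval : ∀ a b c : Fin k, a ∈ B → c ∈ B → a ≤ b → b ≤ c → b ∈ B)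
    (c : ℕ) (hI : (B ∩ I).card ≤ c) (hI' : (B ∩ I').card ≤ c) :
    (B ∩ Iodd).card ≤ c ∧ (B ∩ Ieven).card ≤ c :=
  stmt_11_general k I I' hcover Iodd Ieven hodd heven B hinterval c hI hI'
end

section
/- Let c : L → ℕ be capacities on a laminar family L over a finite ground set, α ∈ (0,1), and let c′ : L′ → ℕ (L′ ⊆ L) be constructed by processing bins in non-increasing cardinality order, discarding a bin A whenever c(A) ≥ c′(B) for the minimal already-kept bin B ⊇ A, and otherwise setting c′(A) := min(c(A), ⌈α·c′(B)⌉). Then: (i) for all A ⊊ B in L′, c′(A) ≤ ⌈α·c′(B)⌉; (ii) every set independent under (L′, c′) is independent under (L, c); and (iii) c′(A) ≥ α·c(A) for every A ∈ L′. -/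
/-!
Each bin `A` is decided from the capacities `m` of the kept bins strictly above it: it is kept
with capacity `c A` if there are none, discarded if `m ≤ c A` for the smallest such `m`, and
otherwise kept with capacity `min (c A) ⌈α m⌉`. A discarded bin is dominated by a kept superset
whose capacity is at most `c A`, which gives (ii); the bound `α c A ≤ c' A` holds because
`α ≤ 1` and `c A < m`.
-/

open Finset

theorem Finset.card_filter_lt_lt_card_filter_lt {α : Type*} [Preorder α] [DecidableLT α]
    (s : Finset α) {a b : α} (hb : b ∈ s) (hab : a < b) :
    #(s.filter (b < ·)) < #(s.filter (a < ·)) := by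
  refine card_lt_card ⟨fun x hx => ?_, fun h => ?_⟩
  · simp only [mem_filter] at hx ⊢
    exact ⟨hx.1, hab.trans hx.2⟩
  · exact lt_irrefl b (mem_filter.mp (h (mem_filter.mpr ⟨hb, hab⟩))).2

namespace LaminarSparsify

noncomputable def capStep (α : ℝ) (n : ℕ) : ℕ∞ → ℕ × Bool
  | ⊤ => (n, true)
  | (m : ℕ) => if m ≤ n then (n, false) else (min n ⌈α * m⌉₊, true)

section capStep

variable {α : ℝ} {n : ℕ}

@[simp] theorem capStep_top : capStep α n ⊤ = (n, true) := rfl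

@[simp] theorem capStep_coe (m : ℕ) :
    capStep α n m = if m ≤ n then (n, false) else (min n ⌈α * m⌉₊, true) := rfl

theorem capStep_fst_le (m : ℕ∞) : (capStep α n m).1 ≤ n := by
  induction m using ENat.recTopCoe with
  | top => simp
  | coe m => rw [capStep_coe]; split_ifs <;> simp [*]

theorem capStep_snd_eq_false_iff {m : ℕ∞} :
    (capStep α n m).2 = false ↔ ∃ k : ℕ, m = k ∧ k ≤ n := by
  induction m using ENat.recTopCoe with
  | top => simp
  | coe m => rw [capStep_coe]; split_ifs <;> simp [*]

theorem capStep_fst_le_ceil (hα : 0 ≤ α) {m : ℕ∞} {k : ℕ} (hmk : m ≤ k)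
    (hkept : (capStep α n m).2) : (capStep α n m).1 ≤ ⌈α * k⌉₊ := by
  induction m using ENat.recTopCoe with
  | top => simp at hmk
  | coe m =>
    rw [capStep_coe] at hkept ⊢
    split_ifs at hkept ⊢
    exact (min_le_right _ _).trans
      (Nat.ceil_mono (mul_le_mul_of_nonneg_left (by exact_mod_cast hmk) hα))

theorem mul_le_capStep_fst (hα0 : 0 ≤ α) (hα1 : α ≤ 1) {m : ℕ∞}
    (hkept : (capStep α n m).2) : α * n ≤ (capStep α n m).1 := by
  have hn : α * n ≤ n := mul_le_of_le_one_left n.cast_nonneg hα1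
  induction m using ENat.recTopCoe with
  | top => simpa using hn
  | coe m =>
    rw [capStep_coe] at hkept ⊢
    split_ifs at hkept ⊢ with hm
    simp only [Nat.cast_min, le_min_iff]
    refine ⟨hn, ?_⟩
    calc α * n ≤ α * m := mul_le_mul_of_nonneg_left (by exact_mod_cast (not_le.mp hm).le) hα0
      _ ≤ ⌈α * m⌉₊ := Nat.le_ceil _

end capStep

def keptCap (p : ℕ × Bool) : ℕ∞ := if p.2 then p.1 else ⊤

variable {U : Type*} [DecidableEq U]

/-- `sparsify L c α A = (c' A, A ∈ L')`. The paper compares with the minimal kept `B ⊃ A`; here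
the minimum of `c'` over all kept `B ⊃ A` is used, which agrees with it on laminar families,
where these `B` form a chain along which `c'` shrinks. -/
noncomputable def sparsify (L : Finset (Finset U)) (c : Finset U → ℕ) (α : ℝ)
    (A : Finset U) : ℕ × Bool :=
  capStep α (c A) ((L.filter (A < ·)).attach.inf fun B => keptCap (sparsify L c α B))
termination_by #(L.filter (A < ·))
decreasing_by
  exact card_filter_lt_lt_card_filter_lt L (mem_filter.mp B.2).1 (mem_filter.mp B.2).2

variable (L : Finset (Finset U)) (c : Finset U → ℕ) (α : ℝ)

theorem sparsify_eq (A : Finset U) :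
    sparsify L c α A =
      capStep α (c A) ((L.filter (A < ·)).inf fun B => keptCap (sparsify L c α B)) := by
  rw [sparsify.eq_1]
  exact congrArg _ (inf_attach _ fun B => keptCap (sparsify L c α B))

theorem sparsify_fst_le (A : Finset U) : (sparsify L c α A).1 ≤ c A := by
  rw [sparsify_eq]
  exact capStep_fst_le _

theorem inf_keptCap_le {A B : Finset U} (hB : B ∈ L) (hAB : A ⊂ B)
    (hBkept : (sparsify L c α B).2) :
    ((L.filter (A < ·)).inf fun B => keptCap (sparsify L c α B)) ≤ (sparsify L c α B).1 :=
  (Finset.inf_le (mem_filter.mpr ⟨hB, hAB⟩)).trans_eq (if_pos hBkept)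

variable {L c α}

theorem sparsify_fst_le_ceil (hα : 0 ≤ α) {A B : Finset U} (hB : B ∈ L) (hAB : A ⊂ B)
    (hAkept : (sparsify L c α A).2) (hBkept : (sparsify L c α B).2) :
    (sparsify L c α A).1 ≤ ⌈α * (sparsify L c α B).1⌉₊ := by
  rw [sparsify_eq] at hAkept ⊢
  exact capStep_fst_le_ceil hα (inf_keptCap_le L c α hB hAB hBkept) hAkept

theorem exists_kept_superset (A : Finset U) (hA : (sparsify L c α A).2 = false) :
    ∃ B ∈ L, A ⊂ B ∧ (sparsify L c α B).2 ∧ (sparsify L c α B).1 ≤ c A := by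
  rw [sparsify_eq, capStep_snd_eq_false_iff] at hA
  obtain ⟨k, hinf, hk⟩ := hA
  have hne : (L.filter (A < ·)).Nonempty := by
    by_contra hempty
    simp [not_nonempty_iff_eq_empty.mp hempty] at hinf
  obtain ⟨B, hB, hBk⟩ := exists_mem_eq_inf _ hne fun B => keptCap (sparsify L c α B)
  rw [hinf] at hBk
  obtain ⟨hBL, hAB⟩ := mem_filter.mp hB
  by_cases hBkept : (sparsify L c α B).2
  · refine ⟨B, hBL, hAB, hBkept, ?_⟩
    rw [keptCap, if_pos hBkept] at hBk
    exact (Nat.cast_inj.mp hBk).symm ▸ hk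
  · simp [keptCap, hBkept] at hBk

theorem mul_le_sparsify_fst (hα0 : 0 ≤ α) (hα1 : α ≤ 1) {A : Finset U}
    (hA : (sparsify L c α A).2) : α * c A ≤ (sparsify L c α A).1 := by
  rw [sparsify_eq] at hA ⊢
  exact mul_le_capStep_fst hα0 hα1 hA

variable (L c α) in
noncomputable def keptBins : Finset (Finset U) := L.filter fun A => (sparsify L c α A).2

theorem card_inter_le_of_keptBins {S : Finset U}
    (hS : ∀ A ∈ keptBins L c α, #(S ∩ A) ≤ (sparsify L c α A).1) {A : Finset U}
    (hA : A ∈ L) : #(S ∩ A) ≤ c A := by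
  by_cases hAkept : (sparsify L c α A).2
  · exact (hS A (mem_filter.mpr ⟨hA, hAkept⟩)).trans (sparsify_fst_le L c α A)
  · obtain ⟨B, hBL, hAB, hBkept, hBA⟩ := exists_kept_superset A (Bool.eq_false_iff.mpr hAkept)
    calc #(S ∩ A) ≤ #(S ∩ B) := card_le_card (inter_subset_inter_left hAB.subset)
      _ ≤ (sparsify L c α B).1 := hS B (mem_filter.mpr ⟨hBL, hBkept⟩)
      _ ≤ c A := hBA

end LaminarSparsify

open LaminarSparsify in
theorem stmt_12_general {U : Type*} [DecidableEq U]
    (L : Finset (Finset U))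
    (c : Finset U → ℕ) (α : ℝ) (hα0 : 0 < α) (hα1 : α < 1) :
    ∃ L' : Finset (Finset U), L' ⊆ L ∧ ∃ c' : Finset U → ℕ,
      (∀ A ∈ L', ∀ B ∈ L', A ⊂ B → c' A ≤ ⌈α * (c' B : ℝ)⌉₊) ∧
      (∀ S : Finset U, (∀ A ∈ L', (S ∩ A).card ≤ c' A) →
        ∀ A ∈ L, (S ∩ A).card ≤ c A) ∧
      (∀ A ∈ L', α * (c A : ℝ) ≤ (c' A : ℝ)) := by
  refine ⟨keptBins L c α, filter_subset _ _, fun A => (sparsify L c α A).1, ?_,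
    fun S hS A hA => card_inter_le_of_keptBins hS hA, ?_⟩
  · intro A hA B hB hAB
    exact sparsify_fst_le_ceil hα0.le (mem_filter.mp hB).1 hAB (mem_filter.mp hA).2
      (mem_filter.mp hB).2
  · intro A hA
    exact mul_le_sparsify_fst hα0.le hα1.le (mem_filter.mp hA).2

/-- Laminar capacity sparsification (Lemma 3.2): given a laminar family `L`
with capacities `c` over a finite ground set and `α ∈ (0,1)`, the greedy
construction (processing bins in non-increasing cardinality order, discarding
`A` when `c(A) ≥ c′(B)` for the minimal kept `B ⊇ A`, else setting
`c′(A) := min(c(A), ⌈α·c′(B)⌉)`) yields `L′ ⊆ L` and `c′` such that: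
(i) `c′(A) ≤ ⌈α·c′(B)⌉` for nested `A ⊊ B` in `L′`;
(ii) every set independent for `(L′, c′)` is independent for `(L, c)`;
(iii) `c′(A) ≥ α·c(A)` for every `A ∈ L′`. -/
theorem stmt_12 {U : Type*} [Fintype U] [DecidableEq U]
    (L : Finset (Finset U))
    (hlaminar : ∀ A ∈ L, ∀ B ∈ L, A ⊆ B ∨ B ⊆ A ∨ Disjoint A B)
    (c : Finset U → ℕ) (α : ℝ) (hα0 : 0 < α) (hα1 : α < 1) :
    ∃ L' : Finset (Finset U), L' ⊆ L ∧ ∃ c' : Finset U → ℕ,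
      (∀ A ∈ L', ∀ B ∈ L', A ⊂ B → c' A ≤ ⌈α * (c' B : ℝ)⌉₊) ∧
      (∀ S : Finset U, (∀ A ∈ L', (S ∩ A).card ≤ c' A) →
        ∀ A ∈ L, (S ∩ A).card ≤ c A) ∧
      (∀ A ∈ L', α * (c A : ℝ) ≤ (c' A : ℝ)) :=
  stmt_12_general L c α hα0 hα1
end
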